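/- arXiv:2210.08688 — 3 statements merged into one kernel-verified Lean document; each statement's English description precedes it below -/
import Mathlib

section
/- Let p be a selective ultrafilter on ω and let (B_n)_{n∈ω} be a sequence of elements of p. Then there exists a strictly increasing sequence (a_n)_{n∈ω} of natural numbers such that {a_n : n ∈ ω} ∈ p and a_n ∈ B_n for every n ∈ ω. -/
/-- For a selective ultrafilter p and a sequence (Bₙ) of elements of p, there is a
strictly increasing sequence (aₙ) with range in p and aₙ ∈ Bₙ for all n. -/
theorem stmt_3 (p : Ultrafilter ℕ) (hfree : (p : Filter ℕ) ≤ Filter.cofinite)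
    (hsel : ∀ P : ℕ → Set ℕ, Pairwise (Function.onFun Disjoint P) →
      (⋃ n, P n) = Set.univ →
      (∃ m, P m ∈ p) ∨ ∃ B ∈ p, ∀ n, (B ∩ P n).Subsingleton)
    (B : ℕ → Set ℕ) (hB : ∀ n, B n ∈ p) :
    ∃ a : ℕ → ℕ, StrictMono a ∧ Set.range a ∈ p ∧ ∀ n, a n ∈ B n := by
  classical
  -- finite sets are not in p
  have hfin_not : ∀ s : Set ℕ, s.Finite → s ∉ p := by
    intro s hs hsp
    have h1 : sᶜ ∈ p := hfree hs.compl_mem_cofinite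
    exact (Ultrafilter.compl_mem_iff_notMem.mp h1) hsp
  -- decreasing intersections
  set B' : ℕ → Set ℕ := fun n => ⋂ k ∈ Set.Iic n, B k with hB'def
  have hB' : ∀ n, B' n ∈ p := by
    intro n
    exact (Filter.biInter_mem (Set.finite_Iic n)).mpr fun k _ => hB k
  have hB'anti : ∀ {m n : ℕ}, m ≤ n → B' n ⊆ B' m := by
    intro m n hmn x hx
    simp only [hB'def, Set.mem_iInter, Set.mem_Iic] at hx ⊢
    exact fun k hk => hx k (hk.trans hmn)
  have hB'sub : ∀ {n : ℕ}, B' n ⊆ B n := by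
    intro n x hx
    simp only [hB'def, Set.mem_iInter, Set.mem_Iic] at hx
    exact hx n le_rfl
  -- Step 1: pseudo-intersection C ∈ p with C \ B' n finite for all n
  obtain ⟨C, hCp, hCfin⟩ : ∃ C ∈ p, ∀ n, (C \ B' n).Finite := by
    set f : ℕ → ℕ := fun x => if h : ∃ n, x ∉ B' n then Nat.find h else 0 with hfdef
    have hdisj : Pairwise (Function.onFun Disjoint fun n => f ⁻¹' {n}) := by
      intro m n hmn
      simp only [Function.onFun, Set.disjoint_left]
      intro x hxm hxn
      exact hmn ((Set.mem_preimage.mp hxm).symm.trans (Set.mem_preimage.mp hxn))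
    have hcover : (⋃ n, f ⁻¹' {n}) = Set.univ := by
      ext x; simp only [Set.mem_iUnion, Set.mem_preimage, Set.mem_singleton_iff,
        Set.mem_univ, iff_true]
      exact ⟨f x, rfl⟩
    rcases hsel _ hdisj hcover with ⟨m, hm⟩ | ⟨D, hDp, hDsub⟩
    · -- some fiber in p: must be fiber 0 and the total intersection is in p
      by_cases hm0 : m = 0
      · subst hm0
        refine ⟨⋂ n, B' n, ?_, fun n => Set.finite_empty.subset fun x hx => hx.2 (Set.mem_iInter.mp hx.1 n)⟩
        have hsub : (f ⁻¹' {0}) ∩ B' 0 ⊆ ⋂ n, B' n := by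
          intro x hx
          simp only [Set.mem_preimage, Set.mem_singleton_iff, Set.mem_inter_iff] at hx
          obtain ⟨hf0, hx0⟩ := hx
          simp only [Set.mem_iInter]
          intro n
          by_contra hxn
          have h : ∃ n, x ∉ B' n := ⟨n, hxn⟩
          rw [hfdef] at hf0
          simp only [dif_pos h] at hf0
          exact (hf0 ▸ Nat.find_spec h) hx0
        exact Filter.mem_of_superset (Filter.inter_mem hm (hB' 0)) hsub
      · exfalso
        have hsub : (f ⁻¹' {m}) ∩ B' m ⊆ (∅ : Set ℕ) := by
          intro x hx
          simp only [Set.mem_preimage, Set.mem_singleton_iff, Set.mem_inter_iff] at hx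
          obtain ⟨hfm, hxm⟩ := hx
          by_cases h : ∃ n, x ∉ B' n
          · rw [hfdef] at hfm; simp only [dif_pos h] at hfm
            exact (hfm ▸ Nat.find_spec h) hxm
          · rw [hfdef] at hfm; simp only [dif_neg h] at hfm
            exact hm0 hfm.symm
        have := Filter.mem_of_superset (Filter.inter_mem hm (hB' m)) hsub
        exact hfin_not ∅ Set.finite_empty this
    · -- selector D: C := D ∩ B' 0 works
      refine ⟨D ∩ B' 0, Filter.inter_mem hDp (hB' 0), fun n => ?_⟩
      have hsub : (D ∩ B' 0) \ B' n ⊆ ⋃ k ∈ Set.Iic n, D ∩ f ⁻¹' {k} := by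
        intro x hx
        obtain ⟨⟨hxD, hx0⟩, hxn⟩ := hx
        have h : ∃ m, x ∉ B' m := ⟨n, hxn⟩
        have hfx : f x = Nat.find h := by rw [hfdef]; simp [dif_pos h]
        have hle : f x ≤ n := hfx ▸ Nat.find_le hxn
        simp only [Set.mem_iUnion, Set.mem_Iic]
        exact ⟨f x, hle, hxD, rfl⟩
      exact Set.Finite.subset
        ((Set.finite_Iic n).biUnion fun k _ => (hDsub k).finite) hsub
  -- bounds: past t m, elements of C are in B' m
  have hbd : ∀ m, ∃ t, ∀ x, x ∈ C → t ≤ x → x ∈ B' m := by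
    intro m
    obtain ⟨t, ht⟩ := (hCfin m).bddAbove
    refine ⟨t + 1, fun x hxC ht2x => ?_⟩
    by_contra hxm
    exact absurd (ht ⟨hxC, hxm⟩) (by omega)
  choose t ht using hbd
  -- the interval endpoints ν
  set ν : ℕ → ℕ := fun n => Nat.rec 0 (fun _ νk => max (νk + 1) (t νk)) n with hνdef
  have hν0 : ν 0 = 0 := rfl
  have hνsucc : ∀ k, ν (k + 1) = max (ν k + 1) (t (ν k)) := fun k => rfl
  have hνmono : StrictMono ν := by
    apply strictMono_nat_of_lt_succ
    intro k; rw [hνsucc k]; omega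
  have hkey : ∀ k x, x ∈ C → ν (k + 1) ≤ x → x ∈ B' (ν k) := by
    intro k x hxC hx
    refine ht (ν k) x hxC ?_
    have := hνsucc k; omega
  -- interval index function
  set g : ℕ → ℕ := fun x => Nat.findGreatest (fun k => ν k ≤ x) x with hgdef
  have hg1 : ∀ x, ν (g x) ≤ x := by
    intro x
    exact Nat.findGreatest_spec (P := fun k => ν k ≤ x) (Nat.zero_le x)
      (hν0.trans_le (Nat.zero_le x))
  have hg2 : ∀ x, x < ν (g x + 1) := by
    intro x
    by_contra h
    push_neg at h
    have h1 : g x + 1 ≤ ν (g x + 1) := hνmono.le_apply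
    have h2 : g x + 1 ≤ g x :=
      Nat.le_findGreatest (P := fun k => ν k ≤ x) (by omega) h
    omega
  have hgmono : ∀ {x y : ℕ}, x ≤ y → g x ≤ g y := by
    intro x y hxy
    exact Nat.le_findGreatest (P := fun k => ν k ≤ y)
      ((Nat.findGreatest_le (P := fun k => ν k ≤ x) x).trans hxy) ((hg1 x).trans hxy)
  -- fibers of g are finite
  have hgfib : ∀ n, (g ⁻¹' {n}).Finite := by
    intro n
    refine (Set.finite_Iio (ν (n + 1))).subset ?_
    intro x hx
    have := hg2 x
    simp only [Set.mem_preimage, Set.mem_singleton_iff] at hx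
    rw [hx] at this
    exact this
  -- second application of selectivity
  have hdisj2 : Pairwise (Function.onFun Disjoint fun n => g ⁻¹' {n}) := by
    intro m n hmn
    simp only [Function.onFun, Set.disjoint_left]
    intro x hxm hxn
    exact hmn ((Set.mem_preimage.mp hxm).symm.trans (Set.mem_preimage.mp hxn))
  have hcover2 : (⋃ n, g ⁻¹' {n}) = Set.univ := by
    ext x; simp only [Set.mem_iUnion, Set.mem_preimage, Set.mem_singleton_iff,
      Set.mem_univ, iff_true]
    exact ⟨g x, rfl⟩
  rcases hsel _ hdisj2 hcover2 with ⟨m, hm⟩ | ⟨D, hDp, hDsub⟩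
  · exact absurd hm (hfin_not _ (hgfib m))
  -- parity split
  obtain ⟨r, hr⟩ : ∃ r, {x | g x % 2 = r} ∈ p := by
    rcases Ultrafilter.mem_or_compl_mem p {x | g x % 2 = 0} with h | h
    · exact ⟨0, h⟩
    · refine ⟨1, Filter.mem_of_superset h ?_⟩
      intro x hx
      simp only [Set.mem_compl_iff, Set.mem_setOf_eq] at hx ⊢
      omega
  -- the diagonal set A
  set A : Set ℕ := D ∩ C ∩ B' 0 ∩ {x | 1 ≤ x} ∩ {x | g x % 2 = r} with hAdef
  have hone : {x : ℕ | 1 ≤ x} ∈ p := by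
    refine hfree ?_
    rw [Filter.mem_cofinite]
    refine (Set.finite_singleton 0).subset ?_
    intro x hx
    simp only [Set.mem_compl_iff, Set.mem_setOf_eq, not_le] at hx
    simp only [Set.mem_singleton_iff]; omega
  have hAp : A ∈ p :=
    Filter.inter_mem (Filter.inter_mem (Filter.inter_mem
      (Filter.inter_mem hDp hCp) (hB' 0)) hone) hr
  -- diagonal property
  have hdiag : ∀ x ∈ A, ∀ y ∈ A, x < y → y ∈ B' x := by
    intro x hx y hy hxy
    obtain ⟨⟨⟨⟨hxD, hxC⟩, -⟩, -⟩, hxr⟩ := hx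
    obtain ⟨⟨⟨⟨hyD, hyC⟩, -⟩, -⟩, hyr⟩ := hy
    have hgne : g x ≠ g y := by
      intro hgeq
      have := hDsub (g x) ⟨hxD, rfl⟩ ⟨hyD, hgeq.symm⟩
      omega
    have hgle : g x ≤ g y := hgmono hxy.le
    have h2 : g x + 2 ≤ g y := by
      simp only [Set.mem_setOf_eq] at hxr hyr
      omega
    have hy' : ν (g x + 1 + 1) ≤ y := le_trans (hνmono.monotone (show g x + 1 + 1 ≤ g y by omega)) (hg1 y)
    have hyB : y ∈ B' (ν (g x + 1)) := hkey (g x + 1) y hyC hy'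
    exact hB'anti (le_of_lt (hg2 x)) hyB
  -- A is infinite
  have hAinf : A.Infinite := by
    by_contra h
    rw [Set.not_infinite] at h
    exact hfin_not A h hAp
  have hAinf' : (setOf fun x => x ∈ A).Infinite := hAinf
  -- the enumeration
  refine ⟨Nat.nth (· ∈ A), Nat.nth_strictMono hAinf', ?_, ?_⟩
  · rw [Nat.range_nth_of_infinite hAinf']
    exact hAp
  · intro n
    have hmem : ∀ k, Nat.nth (· ∈ A) k ∈ A := Nat.nth_mem_of_infinite hAinf'
    have hlow : ∀ k, k + 1 ≤ Nat.nth (· ∈ A) k := by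
      intro k
      induction k with
      | zero => exact (hmem 0).1.2
      | succ k ih =>
        have := (Nat.nth_strictMono hAinf') (by omega : k < k + 1)
        omega
    cases n with
    | zero => exact hB'sub (hmem 0).1.1.2
    | succ n =>
      have hlt : Nat.nth (· ∈ A) n < Nat.nth (· ∈ A) (n + 1) :=
        (Nat.nth_strictMono hAinf') (by omega : n < n + 1)
      have := hdiag _ (hmem n) _ (hmem (n + 1)) hlt
      exact hB'sub (hB'anti (hlow n) this)
end

section
/- Let p be a free ultrafilter on ω, G a topological abelian group, φ : Q^(κ) → G a group homomorphism from the direct sum of κ copies of ℚ, M a ℚ-linear subspace of (Q^(κ))^ω, and B ⊆ M a set such that {[f]_p : f ∈ B} is a basis of the image of M in the ultrapower of Q^(κ) by p. Suppose that for each f ∈ B and each N ∈ ℕ⁺, the sequence (φ((1/N)·f(n)))_{n∈ω} has a p-limit a_{N,f} in G. Then for every h ∈ M, the sequence (φ(h(n)))_{n∈ω} has a p-limit in G, and this p-limit lies in the subgroup of G generated by {a_{N,f} : N ∈ ℕ⁺, f ∈ B}. -/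
open Filter Topology

/-!
Say that `h` has divisible limits if, for every `N > 0`, the sequence `φ ((1/N) • h n)` has a
`p`-limit in the subgroup `H` generated by the limits `a_{N,f}`. Such sequences form a
`ℚ`-subspace: sums are handled by additivity of limits, and for `q = a/b` one writes
`(1/N) • q • v = a • (1/(N b)) • v`, so that `φ` of it tends to `a` times a limit in `H`. This
subspace contains `B` and is closed under agreement on a `p`-large set, so it contains every
`h ∈ M`, whose germ lies in the span of the germs of `B`. Take `N = 1`.
-/

namespace Filter.Germ

variable {α M : Type*} (R : Type*) [Semiring R] [AddCommMonoid M] [Module R M]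

def coeLinearMap (l : Filter α) : (α → M) →ₗ[R] Germ l M where
  toFun := (↑)
  map_add' _ _ := rfl
  map_smul' _ _ := rfl

theorem exists_eventuallyEq_mem_span_of_coe_mem_span {l : Filter α} {B : Set (α → M)}
    {h : α → M} (hh : (h : Germ l M) ∈ Submodule.span R ((↑) '' B)) :
    ∃ h' ∈ Submodule.span R B, h =ᶠ[l] h' := by
  rw [show ((↑) '' B : Set (Germ l M)) = coeLinearMap R l '' B from rfl, Submodule.span_image,
    Submodule.mem_map] at hh
  obtain ⟨h', h'_mem, h'_coe⟩ := hh
  exact ⟨h', h'_mem, (Germ.coe_eq.mp h'_coe).symm⟩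

end Filter.Germ

section DivisibleLimits

variable {α V G : Type*} [AddCommGroup V] [Module ℚ V] [AddCommGroup G] [TopologicalSpace G]
  [IsTopologicalAddGroup G]

theorem inv_natCast_smul_rat_smul (N : ℕ) (q : ℚ) (v : V) :
    (N : ℚ)⁻¹ • q • v = q.num • ((N * q.den : ℕ) : ℚ)⁻¹ • v := by
  rw [← Int.cast_smul_eq_zsmul ℚ, smul_smul, smul_smul]
  congr 1
  push_cast
  nth_rewrite 1 [← Rat.num_div_den q]
  field_simp

def divisibleLimitsSubmodule (l : Filter α) (φ : V →+ G) (H : AddSubgroup G) :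
    Submodule ℚ (α → V) where
  carrier := {h | ∀ N : ℕ, 0 < N → ∃ L ∈ H, Tendsto (fun n => φ ((N : ℚ)⁻¹ • h n)) l (𝓝 L)}
  zero_mem' N _ := ⟨0, H.zero_mem, by simpa using tendsto_const_nhds⟩
  add_mem' {h₁ h₂} h₁_mem h₂_mem N hN := by
    obtain ⟨L₁, hL₁, h₁_tendsto⟩ := h₁_mem N hN
    obtain ⟨L₂, hL₂, h₂_tendsto⟩ := h₂_mem N hN
    exact ⟨L₁ + L₂, H.add_mem hL₁ hL₂, by simpa using h₁_tendsto.add h₂_tendsto⟩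
  smul_mem' q h h_mem N hN := by
    obtain ⟨L, hL, h_tendsto⟩ := h_mem (N * q.den) (Nat.mul_pos hN q.den_pos)
    refine ⟨q.num • L, H.zsmul_mem hL _, ?_⟩
    simpa [inv_natCast_smul_rat_smul] using h_tendsto.const_smul q.num

end DivisibleLimits

theorem stmt_5_general {κ : Type*} {G : Type*} [AddCommGroup G] [TopologicalSpace G]
    [IsTopologicalAddGroup G]
    (p : Ultrafilter ℕ)
    (φ : (κ →₀ ℚ) →+ G) (M : Submodule ℚ (ℕ → (κ →₀ ℚ)))
    (B : Set (ℕ → (κ →₀ ℚ)))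
    (hspan : ∀ h ∈ M, ((h : ℕ → (κ →₀ ℚ)) : (p : Filter ℕ).Germ (κ →₀ ℚ)) ∈
      Submodule.span ℚ
        ((fun f : ℕ → (κ →₀ ℚ) => ((f : (p : Filter ℕ).Germ (κ →₀ ℚ)))) '' B))
    (hlim : ∀ f ∈ B, ∀ N : ℕ, 0 < N →
      ∃ a : G, Filter.Tendsto (fun n => φ ((N : ℚ)⁻¹ • f n)) (p : Filter ℕ) (nhds a)) :
    ∀ h ∈ M, ∃ L : G,
      Filter.Tendsto (fun n => φ (h n)) (p : Filter ℕ) (nhds L) ∧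
      L ∈ AddSubgroup.closure {a : G | ∃ f ∈ B, ∃ N : ℕ, 0 < N ∧
        Filter.Tendsto (fun n => φ ((N : ℚ)⁻¹ • f n)) (p : Filter ℕ) (nhds a)} := by
  intro h hh
  set H := AddSubgroup.closure {a : G | ∃ f ∈ B, ∃ N : ℕ, 0 < N ∧
    Filter.Tendsto (fun n => φ ((N : ℚ)⁻¹ • f n)) (p : Filter ℕ) (nhds a)}
  have hB : B ⊆ divisibleLimitsSubmodule (p : Filter ℕ) φ H := fun f hf N hN =>
    let ⟨a, ha⟩ := hlim f hf N hN
    ⟨a, AddSubgroup.subset_closure ⟨f, hf, N, hN, ha⟩, ha⟩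
  obtain ⟨h', h'_mem, hh'⟩ := Germ.exists_eventuallyEq_mem_span_of_coe_mem_span ℚ (hspan h hh)
  obtain ⟨L, hL, h'_tendsto⟩ := Submodule.span_le.mpr hB h'_mem 1 one_pos
  refine ⟨L, h'_tendsto.congr' ?_, hL⟩
  filter_upwards [hh'] with n hn
  simp [hn]

/-- If B ⊆ M has p-linearly independent germs spanning the image of M in the
ultrapower of ℚ^(κ), and for each f ∈ B and N ∈ ℕ⁺ the sequence (φ((1/N)·f(n)))ₙ
has a p-limit, then for every h ∈ M the sequence (φ(h(n)))ₙ has a p-limit, which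
lies in the subgroup generated by the p-limits a_{N,f}. -/
theorem stmt_5 {κ : Type*} {G : Type*} [AddCommGroup G] [TopologicalSpace G]
    [IsTopologicalAddGroup G] [T2Space G]
    (p : Ultrafilter ℕ) (hfree : (p : Filter ℕ) ≤ Filter.cofinite)
    (φ : (κ →₀ ℚ) →+ G) (M : Submodule ℚ (ℕ → (κ →₀ ℚ)))
    (B : Set (ℕ → (κ →₀ ℚ))) (hBM : B ⊆ (M : Set (ℕ → (κ →₀ ℚ))))
    (hind : LinearIndependent ℚ
      (fun f : B => ((f : ℕ → (κ →₀ ℚ)) : (p : Filter ℕ).Germ (κ →₀ ℚ))))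
    (hspan : ∀ h ∈ M, ((h : ℕ → (κ →₀ ℚ)) : (p : Filter ℕ).Germ (κ →₀ ℚ)) ∈
      Submodule.span ℚ
        ((fun f : ℕ → (κ →₀ ℚ) => ((f : (p : Filter ℕ).Germ (κ →₀ ℚ)))) '' B))
    (hlim : ∀ f ∈ B, ∀ N : ℕ, 0 < N →
      ∃ a : G, Filter.Tendsto (fun n => φ ((N : ℚ)⁻¹ • f n)) (p : Filter ℕ) (nhds a)) :
    ∀ h ∈ M, ∃ L : G,
      Filter.Tendsto (fun n => φ (h n)) (p : Filter ℕ) (nhds L) ∧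
      L ∈ AddSubgroup.closure {a : G | ∃ f ∈ B, ∃ N : ℕ, 0 < N ∧
        Filter.Tendsto (fun n => φ ((N : ℚ)⁻¹ • f n)) (p : Filter ℕ) (nhds a)} :=
  stmt_5_general p φ M B hspan hlim
end

section
/- Let r¹, r², r³ be sequences of non-negative rationals. Then there exist a strictly increasing function h : ω → ω, a finite family F of strictly monotone rational sequences such that F ∪ {the constant sequence 1} is linearly independent in ℚ^ω, non-negative rationals k₁, k₂, k₃, and rationals a_f, b_f, c_f (f ∈ F), such that for all n: (r¹∘h)(n) = k₁ + Σ_{f∈F} a_f·f(n), (r²∘h)(n) = k₂ + Σ_{f∈F} b_f·f(n), and (r³∘h)(n) = k₃ + Σ_{f∈F} c_f·f(n). -/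
/-!
After passing to a common subsequence, each of finitely many rational sequences is strictly
increasing, strictly decreasing or constant (Ramsey / Erdős–Szekeres, applied once per sequence).
Write each such sequence `g` as `g 0 • 1 + (g - g 0)`. The sequences `g - g 0` all vanish at `0`, so
a linearly independent subfamily spanning them stays independent after adjoining `1`; its members
are nonzero, hence come from non-constant `g` and are strictly monotone. The constants `g 0` are
values of the sequences and thus non-negative.
-/

open Submodule

section Order

variable {α β γ : Type*}

def StrictMonoOrAntiOrConst [Preorder α] [Preorder β] (f : β → α) : Prop :=
  StrictMono f ∨ StrictAnti f ∨ ∃ c, ∀ n, f n = c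

theorem StrictMonoOrAntiOrConst.comp_strictMono [Preorder α] [Preorder β] [Preorder γ]
    {f : β → α} (hf : StrictMonoOrAntiOrConst f) {φ : γ → β} (hφ : StrictMono φ) :
    StrictMonoOrAntiOrConst (f ∘ φ) := by
  rcases hf with hf | hf | ⟨c, hf⟩
  · exact .inl (hf.comp hφ)
  · exact .inr (.inl (hf.comp_strictMono hφ))
  · exact .inr (.inr ⟨c, fun n => hf (φ n)⟩)

theorem StrictMonoOrAntiOrConst.sub_apply [AddCommGroup α] [LinearOrder α] [IsOrderedAddMonoid α]
    [Preorder β] {f : β → α} (hf : StrictMonoOrAntiOrConst f) (b : β)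
    (hne : (fun n => f n - f b) ≠ 0) :
    StrictMono (fun n => f n - f b) ∨ StrictAnti (fun n => f n - f b) := by
  rcases hf with hf | hf | ⟨c, hf⟩
  · exact .inl fun m n hmn => sub_lt_sub_right (hf hmn) _
  · exact .inr fun m n hmn => sub_lt_sub_right (hf hmn) _
  · exact absurd (funext fun n => by simp [hf]) hne

theorem exists_strictMono_subseq_strictMono_or_antitone [LinearOrder α] (f : ℕ → α) :
    ∃ φ : ℕ → ℕ, StrictMono φ ∧ (StrictMono (f ∘ φ) ∨ Antitone (f ∘ φ)) := by
  obtain ⟨φ, hφ | hφ⟩ := exists_increasing_or_nonincreasing_subseq (· < ·) f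
  · exact ⟨φ, φ.strictMono, .inl fun m n hmn => hφ m n hmn⟩
  · exact ⟨φ, φ.strictMono, .inr <| antitone_nat_of_succ_le fun n =>
      not_lt.1 (hφ n (n + 1) n.lt_succ_self)⟩

theorem exists_strictMono_subseq_strictAnti_or_monotone [LinearOrder α] (f : ℕ → α) :
    ∃ φ : ℕ → ℕ, StrictMono φ ∧ (StrictAnti (f ∘ φ) ∨ Monotone (f ∘ φ)) :=
  exists_strictMono_subseq_strictMono_or_antitone (α := αᵒᵈ) f

theorem exists_strictMono_subseq_strictMonoOrAntiOrConst [LinearOrder α] (f : ℕ → α) :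
    ∃ φ : ℕ → ℕ, StrictMono φ ∧ StrictMonoOrAntiOrConst (f ∘ φ) := by
  obtain ⟨φ, hφ, hf | hf⟩ := exists_strictMono_subseq_strictMono_or_antitone f
  · exact ⟨φ, hφ, .inl hf⟩
  obtain ⟨ψ, hψ, hg | hg⟩ := exists_strictMono_subseq_strictAnti_or_monotone (f ∘ φ)
  · exact ⟨φ ∘ ψ, hφ.comp hψ, .inr (.inl hg)⟩
  · refine ⟨φ ∘ ψ, hφ.comp hψ, .inr (.inr ⟨f (φ (ψ 0)), fun n => ?_⟩)⟩
    exact le_antisymm (hf.comp_monotone hψ.monotone (Nat.zero_le n)) (hg (Nat.zero_le n))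

theorem exists_strictMono_subseq_forall_strictMonoOrAntiOrConst [LinearOrder α] {ι : Type*}
    (s : Finset ι) (f : ι → ℕ → α) :
    ∃ φ : ℕ → ℕ, StrictMono φ ∧ ∀ i ∈ s, StrictMonoOrAntiOrConst (f i ∘ φ) := by
  classical
  induction s using Finset.induction_on with
  | empty => exact ⟨id, strictMono_id, by simp⟩
  | insert j s _ ih =>
    obtain ⟨φ, hφ, hs⟩ := ih
    obtain ⟨ψ, hψ, hj⟩ := exists_strictMono_subseq_strictMonoOrAntiOrConst (f j ∘ φ)
    exact ⟨φ ∘ ψ, hφ.comp hψ, Finset.forall_mem_insert _ _ _ |>.2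
      ⟨hj, fun i hi => (hs i hi).comp_strictMono hψ⟩⟩

end Order

section LinearAlgebra

theorem one_notMem_span_of_forall_apply_eq_zero {β K : Type*} [Semiring K] [Nontrivial K]
    {s : Set (β → K)} (b : β) (hs : ∀ f ∈ s, f b = 0) : (1 : β → K) ∉ span K s := fun h =>
  one_ne_zero <| (span_le (p := LinearMap.ker (LinearMap.proj b))).2 hs h

theorem exists_finset_linearIndepOn_insert_one {K ι : Type*} [Field K] [Finite ι]
    (g : ι → ℕ → K) :
    ∃ F : Finset (ℕ → K), (∀ f ∈ F, f ≠ 0 ∧ ∃ i, f = fun n => g i n - g i 0) ∧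
      LinearIndepOn K id (insert 1 (F : Set (ℕ → K))) ∧
      ∀ i, ∃ a : (ℕ → K) → K, ∀ n, g i n = g i 0 + ∑ f ∈ F, a f * f n := by
  set s := Set.range fun i n => g i n - g i 0
  obtain ⟨b, hbs, hspan, hb⟩ := exists_linearIndependent K s
  have hbfin : b.Finite := (Set.finite_range _).subset hbs
  have hs0 : ∀ f ∈ s, f 0 = 0 := by rintro _ ⟨i, rfl⟩; simp
  refine ⟨hbfin.toFinset, fun f hf => ?_, ?_, fun i => ?_⟩
  · rw [Set.Finite.mem_toFinset] at hf
    obtain ⟨i, rfl⟩ := hbs hf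
    exact ⟨hb.ne_zero ⟨_, hf⟩, i, rfl⟩
  · rw [hbfin.coe_toFinset]
    exact LinearIndepOn.id_insert hb (hspan ▸ one_notMem_span_of_forall_apply_eq_zero 0 hs0)
  · have hmem : (fun n => g i n - g i 0) ∈ span K (hbfin.toFinset : Set (ℕ → K)) := by
      rw [hbfin.coe_toFinset, hspan]
      exact subset_span ⟨i, rfl⟩
    obtain ⟨a, -, ha⟩ := mem_span_finset.1 hmem
    refine ⟨a, fun n => ?_⟩
    have := congrFun ha n
    simp only [Finset.sum_apply, Pi.smul_apply, smul_eq_mul] at this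
    rw [this]
    ring

end LinearAlgebra

/-- Given three sequences of non-negative rationals, after passing to a common
subsequence they become non-negative-constant-plus-rational-combinations of a finite
family F of strictly monotone sequences with F ∪ {1⃗} linearly independent in ℚ^ω. -/
theorem stmt_7 (r₁ r₂ r₃ : ℕ → ℚ)
    (h₁ : ∀ n, 0 ≤ r₁ n) (h₂ : ∀ n, 0 ≤ r₂ n) (h₃ : ∀ n, 0 ≤ r₃ n) :
    ∃ (h : ℕ → ℕ), StrictMono h ∧
    ∃ F : Finset (ℕ → ℚ),
      (∀ f ∈ F, StrictMono f ∨ StrictAnti f) ∧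
      LinearIndependent ℚ
        (fun g : (insert (fun _ => (1 : ℚ)) (F : Set (ℕ → ℚ)) : Set (ℕ → ℚ)) =>
          (g : ℕ → ℚ)) ∧
      ∃ (k₁ k₂ k₃ : ℚ), 0 ≤ k₁ ∧ 0 ≤ k₂ ∧ 0 ≤ k₃ ∧
      ∃ (a b c : (ℕ → ℚ) → ℚ), ∀ n : ℕ,
        r₁ (h n) = k₁ + ∑ f ∈ F, a f * f n ∧
        r₂ (h n) = k₂ + ∑ f ∈ F, b f * f n ∧
        r₃ (h n) = k₃ + ∑ f ∈ F, c f * f n := by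
  obtain ⟨φ, hφ, hφr⟩ :=
    exists_strictMono_subseq_forall_strictMonoOrAntiOrConst Finset.univ ![r₁, r₂, r₃]
  obtain ⟨F, hF, hind, hrepr⟩ := exists_finset_linearIndepOn_insert_one fun i => ![r₁, r₂, r₃] i ∘ φ
  refine ⟨φ, hφ, F, fun f hf => ?_, hind, _, _, _, h₁ (φ 0), h₂ (φ 0), h₃ (φ 0), ?_⟩
  · obtain ⟨hf0, i, rfl⟩ := hF f hf
    exact (hφr i (Finset.mem_univ i)).sub_apply 0 hf0
  · obtain ⟨a, ha⟩ := hrepr 0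
    obtain ⟨b, hb⟩ := hrepr 1
    obtain ⟨c, hc⟩ := hrepr 2
    exact ⟨a, b, c, fun n => ⟨ha n, hb n, hc n⟩⟩
end
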